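/- Consider the two-resource instance with weights w = (s_1, ..., s_n, S+1, S+1) where S = ∑ s_i, and m = 2, with makespan threshold t = (3S)/2 + 1 (assuming S even). There exists any assignment with makespan at most t if and only if {s_1, ..., s_n} admits a partition into two parts of equal sum. -/
import Mathlib

/-- Load of resource `x` under assignment `a`. -/
def load {α : Type} [Fintype α] [DecidableEq α] (w : α → ℤ) (a : α → Fin 2) (x : Fin 2) : ℤ :=
  ∑ i ∈ Finset.univ.filter (fun i => a i = x), w i

lemma load_eq {n : ℕ} (w : Fin n ⊕ Fin 2 → ℤ) (a : Fin n ⊕ Fin 2 → Fin 2) (x : Fin 2) :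
    load w a x = (∑ i ∈ Finset.univ.filter (fun i => a (Sum.inl i) = x), w (Sum.inl i))
      + ((if a (Sum.inr 0) = x then w (Sum.inr 0) else 0)
      + (if a (Sum.inr 1) = x then w (Sum.inr 1) else 0)) := by
  rw [load, Finset.sum_filter, Fintype.sum_sum_type, Fin.sum_univ_two, ← Finset.sum_filter]

lemma fin2cases : ∀ x : Fin 2, x = 0 ∨ x = 1 := by decide

theorem stmt_14 {n : ℕ} (s : Fin n → ℤ) (hs : ∀ i, 0 < s i)
    (S : ℤ) (hS : S = ∑ i, s i)
    (w : Fin n ⊕ Fin 2 → ℤ)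
    (hw1 : ∀ i : Fin n, w (Sum.inl i) = s i)
    (hw2 : ∀ j : Fin 2, w (Sum.inr j) = S + 1)
    (t : ℤ) (ht : 2 * t = 3 * S + 2) :
    (∃ a : Fin n ⊕ Fin 2 → Fin 2, max (load w a 0) (load w a 1) ≤ t) ↔
      (∃ T : Finset (Fin n), ∑ i ∈ T, s i = ∑ i ∈ Tᶜ, s i) := by
  have hS0 : 0 ≤ S := by
    rw [hS]; exact Finset.sum_nonneg (fun i _ => (hs i).le)
  constructor
  · rintro ⟨a, ha⟩
    have h0 : load w a 0 ≤ t := le_trans (le_max_left _ _) ha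
    have h1 : load w a 1 ≤ t := le_trans (le_max_right _ _) ha
    -- decompositions
    set T0 : Finset (Fin n) := Finset.univ.filter (fun i => a (Sum.inl i) = 0) with hT0
    set T1 : Finset (Fin n) := Finset.univ.filter (fun i => a (Sum.inl i) = 1) with hT1
    have hcompl : T1 = T0ᶜ := by
      ext i
      simp only [hT0, hT1, Finset.mem_compl, Finset.mem_filter, Finset.mem_univ, true_and]
      rcases fin2cases (a (Sum.inl i)) with h | h <;> simp [h]
    have hAB : ∑ i ∈ T0, s i + ∑ i ∈ T0ᶜ, s i = S := by
      rw [Finset.sum_add_sum_compl, hS]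
    have hl0 := load_eq w a 0
    have hl1 := load_eq w a 1
    have e0 : ∑ i ∈ T0, w (Sum.inl i) = ∑ i ∈ T0, s i := Finset.sum_congr rfl (fun i _ => hw1 i)
    have e1 : ∑ i ∈ T1, w (Sum.inl i) = ∑ i ∈ T0ᶜ, s i := by
      rw [← hcompl]; exact Finset.sum_congr rfl (fun i _ => hw1 i)
    rw [e0] at hl0
    rw [e1] at hl1
    have hT0nn : 0 ≤ ∑ i ∈ T0, s i := Finset.sum_nonneg (fun i _ => (hs i).le)
    have hT1nn : 0 ≤ ∑ i ∈ T0ᶜ, s i := Finset.sum_nonneg (fun i _ => (hs i).le)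
    rw [hw2 0, hw2 1] at hl0 hl1
    refine ⟨T0, ?_⟩
    rcases fin2cases (a (Sum.inr 0)) with hb0 | hb0 <;>
      rcases fin2cases (a (Sum.inr 1)) with hb1 | hb1 <;>
      simp [hb0, hb1] at hl0 hl1 <;> linarith
  · rintro ⟨T, hT⟩
    have hAB : ∑ i ∈ T, s i + ∑ i ∈ Tᶜ, s i = S := by
      rw [Finset.sum_add_sum_compl, hS]
    refine ⟨Sum.elim (fun i => if i ∈ T then 0 else 1) (fun j => j), ?_⟩
    have hl0 := load_eq w (Sum.elim (fun i => if i ∈ T then 0 else 1) (fun j => j)) 0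
    have hl1 := load_eq w (Sum.elim (fun i => if i ∈ T then 0 else 1) (fun j => j)) 1
    have f0 : Finset.univ.filter
        (fun i => Sum.elim (fun i => if i ∈ T then (0 : Fin 2) else 1) (fun j => j) (Sum.inl i) = 0) = T := by
      ext i
      by_cases h : i ∈ T <;> simp [h]
    have f1 : Finset.univ.filter
        (fun i => Sum.elim (fun i => if i ∈ T then (0 : Fin 2) else 1) (fun j => j) (Sum.inl i) = 1) = Tᶜ := by
      ext i
      by_cases h : i ∈ T <;> simp [h]
    rw [f0] at hl0
    rw [f1] at hl1
    have e0 : ∑ i ∈ T, w (Sum.inl i) = ∑ i ∈ T, s i := Finset.sum_congr rfl (fun i _ => hw1 i)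
    have e1 : ∑ i ∈ Tᶜ, w (Sum.inl i) = ∑ i ∈ Tᶜ, s i := Finset.sum_congr rfl (fun i _ => hw1 i)
    rw [e0, hw2 0, hw2 1] at hl0
    rw [e1, hw2 0, hw2 1] at hl1
    simp only [Sum.elim_inr] at hl0 hl1
    norm_num at hl0 hl1
    rw [max_le_iff]
    constructor <;> linarith
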